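/- If q, λ : [t₀, ∞) → ℝ are continuous with |q(t)| ≤ α and λ(t) ≥ h > 0 for all t ≥ t₀, where 4h - α² > 0, then every nontrivial solution y of y'' + q y' + λ y = 0 on [t₀, ∞) changes sign infinitely many times (i.e., for every T ≥ t₀ there exist t₁, t₂ > T with y(t₁) > 0 and y(t₂) < 0). -/

import Mathlib

/-!
If `y` kept one sign beyond some `T`, then either it has a zero there, which is an extremum and
hence a double zero, so `y ≡ 0` by uniqueness; or `y` never vanishes, and the Riccati variable
`w = y'/y` satisfies `w' = -(w² + q w + l) ≤ -ε (1 + w²)` because `4l - q² ≥ 4h - α² > 0`.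
Then `arctan w` decreases at least linearly, which is impossible for a bounded function.
-/

open Real Set

theorem mul_one_add_sq_le_sq_add_mul_add {α h a b : ℝ} (ha : |a| ≤ α) (hb : h ≤ b)
    (hαh : α ^ 2 < 4 * h) (x : ℝ) :
    (h - α ^ 2 / 4) / (1 + h) * (1 + x ^ 2) ≤ x ^ 2 + a * x + b := by
  have hh : 0 < 1 + h := by nlinarith [sq_nonneg α]
  have hax : -(α * |x|) ≤ a * x := by
    linarith [abs_mul a x ▸ neg_abs_le (a * x), mul_le_mul_of_nonneg_right ha (abs_nonneg x)]
  -- with `c = h - α²/4`, `A = 1 + h`, `X = |x|`: `(A - c) ((X² - αX + h) A - c (1 + X²))`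
  -- equals `((A - c) X - αA/2)² + c²`
  have key : (h - α ^ 2 / 4) * (1 + |x| ^ 2) ≤ (|x| ^ 2 - α * |x| + h) * (1 + h) := by
    have hA : 0 < 1 + α ^ 2 / 4 := by positivity
    refine le_of_mul_le_mul_left ?_ hA
    nlinarith [sq_nonneg ((1 + α ^ 2 / 4) * |x| - α * (1 + h) / 2)]
  rw [sq_abs] at key
  rw [div_mul_eq_mul_div, div_le_iff₀ hh]
  nlinarith

theorem false_of_hasDerivAt_le_neg_mul_one_add_sq {w w' : ℝ → ℝ} {T ε : ℝ} (hε : 0 < ε)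
    (hw : ∀ t ≥ T, HasDerivAt w (w' t) t) (hw' : ∀ t ≥ T, w' t ≤ -ε * (1 + w t ^ 2)) :
    False := by
  have hderiv (t) (ht : T ≤ t) :
      HasDerivAt (fun t => arctan (w t) + ε * t) (1 / (1 + w t ^ 2) * w' t + ε) t :=
    (((hw t ht).arctan).add ((hasDerivAt_id' t).const_mul ε)).congr_deriv (by rw [mul_one])
  have hanti : AntitoneOn (fun t => arctan (w t) + ε * t) (Ici T) := by
    refine antitoneOn_of_hasDerivWithinAt_nonpos (convex_Ici T)
      (f' := fun t => 1 / (1 + w t ^ 2) * w' t + ε)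
      (fun t ht => (hderiv t ht).continuousAt.continuousWithinAt) ?_ ?_
    · intro t ht
      rw [interior_Ici] at ht
      exact (hderiv t ht.le).hasDerivWithinAt
    · intro t ht
      rw [interior_Ici] at ht
      have hpos : 0 < 1 + w t ^ 2 := by positivity
      have := hw' t ht.le
      rw [div_mul_eq_mul_div, one_mul, ← sub_neg_eq_add, sub_nonpos, div_le_iff₀ hpos]
      linarith
  have hπε : T ≤ T + π / ε := by linarith [div_pos pi_pos hε]
  have := hanti self_mem_Ici hπε hπε
  simp only [mul_add, mul_div_cancel₀ _ hε.ne'] at this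
  linarith [neg_pi_div_two_lt_arctan (w (T + π / ε)), arctan_lt_pi_div_two (w T)]

theorem lipschitzWith_companion (a b : ℝ) :
    LipschitzWith (1 + |a| + |b|).toNNReal fun p : ℝ × ℝ => (p.2, -(a * p.2) - b * p.1) := by
  refine LipschitzWith.of_dist_le_mul fun p p' => ?_
  rw [Real.coe_toNNReal _ (by positivity)]
  simp only [Prod.dist_eq, Real.dist_eq]
  have h₁ := le_max_left |p.1 - p'.1| |p.2 - p'.2|
  have h₂ := le_max_right |p.1 - p'.1| |p.2 - p'.2|
  have hsecond : |-(a * p.2) - b * p.1 - (-(a * p'.2) - b * p'.1)| ≤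
      |a| * |p.2 - p'.2| + |b| * |p.1 - p'.1| := by
    calc _ = |a * (p.2 - p'.2) + b * (p.1 - p'.1)| := by rw [← abs_neg]; ring_nf
      _ ≤ _ := (abs_add_le _ _).trans (by rw [abs_mul, abs_mul])
  apply max_le
  · nlinarith [abs_nonneg a, abs_nonneg b, abs_nonneg (p.2 - p'.2)]
  · nlinarith [abs_nonneg a, abs_nonneg b, abs_nonneg (p.2 - p'.2), abs_nonneg (p.1 - p'.1)]

structure IsLinearODESolution (q l y y' : ℝ → ℝ) (t₀ : ℝ) : Prop where
  hasDerivAt : ∀ t ≥ t₀, HasDerivAt y (y' t) t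
  hasDerivAt_deriv : ∀ t ≥ t₀, HasDerivAt y' (-(q t * y' t) - l t * y t) t

namespace IsLinearODESolution

variable {q l y y' : ℝ → ℝ} {t₀ : ℝ}

theorem neg (hsol : IsLinearODESolution q l y y' t₀) :
    IsLinearODESolution q l (-y) (-y') t₀ where
  hasDerivAt t ht := (hsol.hasDerivAt t ht).neg
  hasDerivAt_deriv t ht :=
    (hsol.hasDerivAt_deriv t ht).neg.congr_deriv (by simp only [Pi.neg_apply]; ring)

theorem eq_zero_of_eq_zero_of_deriv_eq_zero (hsol : IsLinearODESolution q l y y' t₀)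
    (hq : ContinuousOn q (Ici t₀)) (hl : ContinuousOn l (Ici t₀)) {s : ℝ} (hs : t₀ < s)
    (hys : y s = 0) (hy's : y' s = 0) : ∀ t ≥ t₀, y t = 0 := by
  intro t ht
  set b := max s t + 1
  have hsub : Icc t₀ b ⊆ Ici t₀ := Icc_subset_Ici_self
  obtain ⟨M, hM⟩ := isCompact_Icc.exists_bound_of_continuousOn
    (((hq.mono hsub).abs).add ((hl.mono hsub).abs))
  have hlip : ∀ τ ∈ Ioo t₀ b, LipschitzOnWith (1 + M).toNNReal
      (fun p : ℝ × ℝ => (p.2, -(q τ * p.2) - l τ * p.1)) univ := by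
    intro τ hτ
    have hbound : |q τ| + |l τ| ≤ M := (le_abs_self _).trans (hM τ (Ioo_subset_Icc_self hτ))
    refine ((lipschitzWith_companion (q τ) (l τ)).weaken ?_).lipschitzOnWith
    exact Real.toNNReal_le_toNNReal (by linarith)
  have hderiv : ∀ τ ≥ t₀, HasDerivAt (fun τ => (y τ, y' τ))
      (y' τ, -(q τ * y' τ) - l τ * y τ) τ :=
    fun τ hτ => (hsol.hasDerivAt τ hτ).prodMk (hsol.hasDerivAt_deriv τ hτ)
  have := ODE_solution_unique_of_mem_Icc (s := fun _ => univ) (g := fun _ => 0) hlip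
    ⟨hs, by simp only [b]; linarith [le_max_left s t]⟩
    (fun τ hτ => (hderiv τ hτ.1).continuousAt.continuousWithinAt)
    (fun τ hτ => hderiv τ hτ.1.le) (fun _ _ => trivial)
    continuousOn_const
    (fun τ _ => (hasDerivAt_const τ (0 : ℝ × ℝ)).congr_deriv (by simp [Prod.zero_eq_mk]))
    (fun _ _ => trivial)
    (by simp [hys, hy's])
    ⟨ht, by simp only [b]; linarith [le_max_right s t]⟩
  exact congrArg Prod.fst this

theorem hasDerivAt_logDeriv (hsol : IsLinearODESolution q l y y' t₀) {t : ℝ} (ht : t₀ ≤ t)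
    (hy : y t ≠ 0) :
    HasDerivAt (fun t => y' t / y t) (-((y' t / y t) ^ 2 + q t * (y' t / y t) + l t)) t :=
  ((hsol.hasDerivAt_deriv t ht).div (hsol.hasDerivAt t ht) hy).congr_deriv (by field_simp; ring)

theorem exists_eq_zero (hsol : IsLinearODESolution q l y y' t₀) {α h : ℝ}
    (hq : ∀ t ≥ t₀, |q t| ≤ α) (hl : ∀ t ≥ t₀, h ≤ l t) (hαh : α ^ 2 < 4 * h) :
    ∀ T ≥ t₀, ∃ t ≥ T, y t = 0 := by
  intro T hT
  by_contra! hne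
  have hε : 0 < (h - α ^ 2 / 4) / (1 + h) := div_pos (by linarith) (by nlinarith [sq_nonneg α])
  refine false_of_hasDerivAt_le_neg_mul_one_add_sq hε
    (fun t ht => hsol.hasDerivAt_logDeriv (hT.trans ht) (hne t ht)) fun t ht => ?_
  linarith [mul_one_add_sq_le_sq_add_mul_add (hq t (hT.trans ht)) (hl t (hT.trans ht)) hαh
    (y' t / y t)]

theorem exists_pos (hsol : IsLinearODESolution q l y y' t₀) {α h : ℝ}
    (hq_cont : ContinuousOn q (Ici t₀)) (hl_cont : ContinuousOn l (Ici t₀))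
    (hq : ∀ t ≥ t₀, |q t| ≤ α) (hl : ∀ t ≥ t₀, h ≤ l t) (hαh : α ^ 2 < 4 * h)
    (hne : ∃ t ≥ t₀, y t ≠ 0) : ∀ T ≥ t₀, ∃ t > T, 0 < y t := by
  intro T hT
  by_contra! hle
  obtain ⟨s, hs, hys⟩ := hsol.exists_eq_zero hq hl hαh (T + 1) (by linarith)
  have hmax : IsLocalMax y s := by
    filter_upwards [Ioi_mem_nhds (show T < s by linarith)] with t ht
    exact hys ▸ hle t ht
  have hy's : y' s = 0 := hmax.hasDerivAt_eq_zero (hsol.hasDerivAt s (by linarith))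
  obtain ⟨t, ht, hyt⟩ := hne
  exact hyt
    (hsol.eq_zero_of_eq_zero_of_deriv_eq_zero hq_cont hl_cont (by linarith) hys hy's t ht)

end IsLinearODESolution

theorem stmt_1_general (t₀ α h : ℝ) (q l y y' y'' : ℝ → ℝ)
    (hq_cont : ContinuousOn q (Ici t₀)) (hl_cont : ContinuousOn l (Ici t₀))
    (hq : ∀ t ≥ t₀, |q t| ≤ α) (hl : ∀ t ≥ t₀, l t ≥ h)
    (hαh : 4 * h - α ^ 2 > 0)
    (hy' : ∀ t ≥ t₀, HasDerivAt y (y' t) t)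
    (hy'' : ∀ t ≥ t₀, HasDerivAt y' (y'' t) t)
    (hode : ∀ t ≥ t₀, y'' t + q t * y' t + l t * y t = 0)
    (hnontriv : ∃ t ≥ t₀, y t ≠ 0) :
    ∀ T ≥ t₀, (∃ t₁ > T, y t₁ > 0) ∧ (∃ t₂ > T, y t₂ < 0) := by
  have hsol : IsLinearODESolution q l y y' t₀ :=
    ⟨hy', fun t ht => (hy'' t ht).congr_deriv (by linarith [hode t ht])⟩
  have hαh' : α ^ 2 < 4 * h := by linarith
  intro T hT
  refine ⟨hsol.exists_pos hq_cont hl_cont hq hl hαh' hnontriv T hT, ?_⟩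
  obtain ⟨t, ht, hyt⟩ :=
    hsol.neg.exists_pos hq_cont hl_cont hq hl hαh' (by simpa using hnontriv) T hT
  exact ⟨t, ht, by simpa using hyt⟩

/-- Fite's oscillation theorem: if `q, l : [t₀,∞) → ℝ` are continuous with `|q t| ≤ α`
and `l t ≥ h > 0` for all `t ≥ t₀`, where `4h - α² > 0`, then every nontrivial `C²`
solution `y` of `y'' + q y' + l y = 0` on `[t₀,∞)` changes sign infinitely many times. -/
theorem stmt_1 (t₀ α h : ℝ) (q l y y' y'' : ℝ → ℝ)
    (hq_cont : ContinuousOn q (Ici t₀)) (hl_cont : ContinuousOn l (Ici t₀))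
    (hq : ∀ t ≥ t₀, |q t| ≤ α) (hl : ∀ t ≥ t₀, l t ≥ h) (hh : 0 < h)
    (hαh : 4 * h - α ^ 2 > 0)
    (hy' : ∀ t ≥ t₀, HasDerivAt y (y' t) t)
    (hy'' : ∀ t ≥ t₀, HasDerivAt y' (y'' t) t)
    (hy''_cont : ContinuousOn y'' (Ici t₀))
    (hode : ∀ t ≥ t₀, y'' t + q t * y' t + l t * y t = 0)
    (hnontriv : ∃ t ≥ t₀, y t ≠ 0) :
    ∀ T ≥ t₀, (∃ t₁ > T, y t₁ > 0) ∧ (∃ t₂ > T, y t₂ < 0) :=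
  stmt_1_general t₀ α h q l y y' y'' hq_cont hl_cont hq hl hαh hy' hy'' hode hnontriv
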